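/- Classical exponential formula for formal power series: let R be a commutative ℚ-algebra, (fₙ)_{n≥1} a sequence in R, and f := ∑_{n≥1} fₙ zⁿ/n! ∈ R[[z]]. Then exp(f) = ∑_{n≥0} aₙ zⁿ/n!, where a₀ = 1 and, for n ≥ 1, aₙ = ∑_{π ∈ Πₙ} ∏_{p ∈ π} f_{card p}, with Πₙ the set of all set partitions of {1, …, n} into nonempty blocks. Equivalently, for every n ≥ 0, n! · (coefficient of zⁿ in exp(f)) = ∑_{π ∈ Πₙ} ∏_{p ∈ π} f_{card p}. -/

import Mathlib

/-!
Both sides satisfy the recursion of the complete Bell polynomials,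
`Y₀ = 1`, `Yₙ₊₁ = ∑ⱼ C(n, j) fⱼ₊₁ Yₙ₋ⱼ`. For set partitions, split off the block containing a
distinguished point: it consists of that point and `j` of the remaining `n` points. For
`E = exp(f)`, the chain rule gives `E' = f' E`, and since the product of exponential generating
functions is the exponential generating function of the binomial convolution, this differential
equation is the same recursion for the numbers `n! [zⁿ] E`.
-/
open scoped Classical in
/-- The (finite) set of set partitions of `{1, …, n}` into nonempty blocks. -/
noncomputable def natPartitionsOf (n : ℕ) : Finset (Finset (Finset ℕ)) :=
  ((Finset.Icc 1 n).powerset.powerset).filter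
    (fun π => ∅ ∉ π ∧ (∀ p ∈ π, ∀ q ∈ π, p ≠ q → p ∩ q = ∅) ∧
      π.sup id = Finset.Icc 1 n)

/-- The exponential `exp(g) = ∑_{k ≥ 0} gᵏ/k!` of a formal power series,
computed coefficientwise (the sum of the `n`-th coefficients of the `gᵏ/k!`
has finite support when `g` has zero constant term). -/
noncomputable def expPS {R : Type*} [CommRing R] [Algebra ℚ R]
    (g : PowerSeries R) : PowerSeries R :=
  PowerSeries.mk fun n =>
    ∑ᶠ k : ℕ, ((k.factorial : ℚ)⁻¹) • PowerSeries.coeff (R := R) n (g ^ k)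

section SetPartitions

open Finset

variable {α : Type*} [DecidableEq α]

open scoped Classical in
noncomputable def setPartitions (s : Finset α) : Finset (Finset (Finset α)) :=
  s.powerset.powerset.filter
    (fun π => ∅ ∉ π ∧ (∀ p ∈ π, ∀ q ∈ π, p ≠ q → p ∩ q = ∅) ∧ π.sup id = s)

theorem mem_setPartitions {s : Finset α} {π : Finset (Finset α)} :
    π ∈ setPartitions s ↔
      ∅ ∉ π ∧ (∀ p ∈ π, ∀ q ∈ π, p ≠ q → p ∩ q = ∅) ∧ π.sup id = s := by
  refine ⟨fun h => (mem_filter.1 h).2, fun h => mem_filter.2 ⟨?_, h⟩⟩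
  exact mem_powerset.2 fun p hp => mem_powerset.2 (h.2.2 ▸ le_sup (f := id) hp)

theorem natPartitionsOf_eq_setPartitions (n : ℕ) :
    natPartitionsOf n = setPartitions (Icc 1 n) := rfl

theorem subset_of_mem_setPartitions {s p : Finset α} {π : Finset (Finset α)}
    (hπ : π ∈ setPartitions s) (hp : p ∈ π) : p ⊆ s :=
  (mem_setPartitions.1 hπ).2.2 ▸ le_sup (f := id) hp

theorem setPartitions_empty : setPartitions (∅ : Finset α) = {∅} := by
  ext π
  refine ⟨fun hπ => mem_singleton.2 <| eq_empty_of_forall_notMem fun p hp => ?_, ?_⟩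
  · have hp0 : p = ∅ := subset_empty.1 (subset_of_mem_setPartitions hπ hp)
    exact (mem_setPartitions.1 hπ).1 (hp0 ▸ hp)
  · intro h
    simp [mem_singleton.1 h, mem_setPartitions]

theorem insert_notMem_setPartitions {s B : Finset α} {a : α} {ρ : Finset (Finset α)}
    (ha : a ∉ s) (hρ : ρ ∈ setPartitions s) : insert a B ∉ ρ := fun h =>
  ha (subset_of_mem_setPartitions hρ h (mem_insert_self a B))

theorem insert_mem_setPartitions {u p : Finset α} {ρ : Finset (Finset α)} (hp : p.Nonempty)
    (hpu : p ⊆ u) (hρ : ρ ∈ setPartitions (u \ p)) : insert p ρ ∈ setPartitions u := by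
  obtain ⟨hne, hdisj, hsup⟩ := mem_setPartitions.1 hρ
  have hpq : ∀ q ∈ ρ, p ∩ q = ∅ := fun q hq => disjoint_iff_inter_eq_empty.1
    (subset_sdiff.1 (subset_of_mem_setPartitions hρ hq)).2.symm
  refine mem_setPartitions.2 ⟨?_, ?_, ?_⟩
  · rw [mem_insert, not_or]
    exact ⟨hp.ne_empty.symm, hne⟩
  · simp only [mem_insert]
    rintro q₁ (rfl | hq₁) q₂ (rfl | hq₂) hne
    · exact absurd rfl hne
    · exact hpq q₂ hq₂
    · exact inter_comm q₁ q₂ ▸ hpq q₁ hq₁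
    · exact hdisj q₁ hq₁ q₂ hq₂ hne
  · rw [sup_insert, hsup]
    exact union_sdiff_of_subset hpu

theorem erase_mem_setPartitions {u p : Finset α} {π : Finset (Finset α)}
    (hπ : π ∈ setPartitions u) (hp : p ∈ π) : π.erase p ∈ setPartitions (u \ p) := by
  obtain ⟨hne, hdisj, hsup⟩ := mem_setPartitions.1 hπ
  have hrest : Disjoint ((π.erase p).sup id) p := Finset.disjoint_sup_left.2 fun q hq =>
    disjoint_iff_inter_eq_empty.2 (hdisj q (mem_of_mem_erase hq) p hp (ne_of_mem_erase hq))
  refine mem_setPartitions.2 ⟨fun h => hne (mem_of_mem_erase h),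
    fun q₁ hq₁ q₂ hq₂ => hdisj q₁ (mem_of_mem_erase hq₁) q₂ (mem_of_mem_erase hq₂), ?_⟩
  rw [← hsup, ← insert_erase hp, sup_insert, erase_insert (notMem_erase p π), id,
    sup_sdiff_left_self, hrest.sdiff_eq_left]

theorem sum_setPartitions_insert {M : Type*} [AddCommMonoid M] {a : α} {t : Finset α}
    (ha : a ∉ t) (w : Finset (Finset α) → M) :
    ∑ π ∈ setPartitions (insert a t), w π =
      ∑ B ∈ t.powerset, ∑ ρ ∈ setPartitions (t \ B), w (insert (insert a B) ρ) := by
  have hsdiff (B : Finset α) : insert a t \ insert a B = t \ B := by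
    rw [insert_sdiff_insert, sdiff_insert_of_notMem ha]
  have ha' (B : Finset α) : a ∉ t \ B := fun h => ha (mem_sdiff.1 h).1
  rw [← sum_sigma t.powerset (fun B => setPartitions (t \ B))
    (fun x => w (insert (insert a x.1) x.2))]
  symm
  refine sum_nbij (fun x => insert (insert a x.1) x.2) ?_ ?_ ?_ fun _ _ => rfl
  · rintro ⟨B, ρ⟩ hx
    obtain ⟨hB, hρ⟩ : B ∈ t.powerset ∧ ρ ∈ setPartitions (t \ B) := mem_sigma.1 hx
    exact insert_mem_setPartitions (insert_nonempty a B)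
      (insert_subset_insert a (mem_powerset.1 hB)) (hsdiff B ▸ hρ)
  · rintro ⟨B, ρ⟩ hx ⟨B', ρ'⟩ hx' (heq : insert (insert a B) ρ = insert (insert a B') ρ')
    obtain ⟨hB, hρ⟩ : B ∈ t.powerset ∧ ρ ∈ setPartitions (t \ B) := mem_sigma.1 hx
    obtain ⟨hB', hρ'⟩ : B' ∈ t.powerset ∧ ρ' ∈ setPartitions (t \ B') := mem_sigma.1 hx'
    have hblock : insert a B' = insert a B :=
      (mem_insert.1 (heq ▸ mem_insert_self _ _)).resolve_right
        (insert_notMem_setPartitions (ha' B) hρ)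
    obtain rfl : B = B' := by
      rw [← erase_insert fun h => ha (mem_powerset.1 hB h), ← hblock,
        erase_insert fun h => ha (mem_powerset.1 hB' h)]
    rw [← erase_insert (insert_notMem_setPartitions (ha' B) hρ), heq,
      erase_insert (insert_notMem_setPartitions (ha' B) hρ')]
  · intro π hπ
    obtain ⟨p, hp, hap⟩ : ∃ p ∈ π, a ∈ p :=
      mem_sup.1 ((mem_setPartitions.1 hπ).2.2 ▸ mem_insert_self a t)
    refine ⟨⟨p.erase a, π.erase p⟩, mem_sigma.2 ⟨?_, ?_⟩, ?_⟩
    · exact mem_powerset.2 (subset_insert_iff.1 (subset_of_mem_setPartitions hπ hp))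
    · rw [← hsdiff, insert_erase hap]
      exact erase_mem_setPartitions hπ hp
    · simp only [insert_erase hap, insert_erase hp]

end SetPartitions

section CompleteBell

open Finset

variable {R : Type*} [CommSemiring R]

def completeBell (x : ℕ → R) : ℕ → R
  | 0 => 1
  | n + 1 => ∑ j ∈ range (n + 1), n.choose j • (x (j + 1) * completeBell x (n - j))
decreasing_by omega

theorem completeBell_zero (x : ℕ → R) : completeBell x 0 = 1 := by
  rw [completeBell]

theorem completeBell_succ (x : ℕ → R) (n : ℕ) :
    completeBell x (n + 1) =
      ∑ j ∈ range (n + 1), n.choose j • (x (j + 1) * completeBell x (n - j)) := by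
  rw [completeBell]

theorem eq_completeBell {x y : ℕ → R} (h₀ : y 0 = 1)
    (hsucc : ∀ n, y (n + 1) = ∑ j ∈ range (n + 1), n.choose j • (x (j + 1) * y (n - j))) :
    y = completeBell x := by
  funext n
  induction n using Nat.strong_induction_on with
  | _ n ih =>
    rcases n with _ | n
    · rw [h₀, completeBell_zero]
    · rw [hsucc, completeBell_succ]
      exact sum_congr rfl fun j _ => by rw [ih (n - j) (by omega)]

theorem completeBell_congr {x y : ℕ → R} (h : ∀ n, x (n + 1) = y (n + 1)) :
    completeBell x = completeBell y :=
  eq_completeBell (completeBell_zero x) fun n => by simp only [completeBell_succ, h]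

theorem sum_setPartitions_prod_card {α : Type*} [DecidableEq α] (x : ℕ → R) (s : Finset α) :
    ∑ π ∈ setPartitions s, ∏ p ∈ π, x p.card = completeBell x s.card := by
  induction s using Finset.strongInduction with
  | H s ih =>
    obtain rfl | ⟨a, ha⟩ := s.eq_empty_or_nonempty
    · simp [setPartitions_empty, completeBell_zero]
    have hat : a ∉ s.erase a := notMem_erase a s
    rw [← insert_erase ha, sum_setPartitions_insert hat, card_insert_of_notMem hat,
      completeBell_succ,
      ← sum_powerset_apply_card fun j => x (j + 1) * completeBell x (#(s.erase a) - j)]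
    refine sum_congr rfl fun B hB => ?_
    have hBs : s.erase a \ B ⊂ s := sdiff_subset.trans_ssubset (erase_ssubset ha)
    have hblock (ρ) (hρ : ρ ∈ setPartitions (s.erase a \ B)) :
        ∏ p ∈ insert (insert a B) ρ, x p.card = x (#B + 1) * ∏ p ∈ ρ, x p.card := by
      rw [prod_insert (insert_notMem_setPartitions (fun h => hat (mem_sdiff.1 h).1) hρ),
        card_insert_of_notMem fun h => hat (mem_powerset.1 hB h)]
    rw [sum_congr rfl hblock, ← mul_sum, ih _ hBs, card_sdiff_of_subset (mem_powerset.1 hB)]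

end CompleteBell

namespace PowerSeries

open Finset Nat

section Egf

variable {R : Type*} [CommSemiring R] [Algebra ℚ R]

def egf (a : ℕ → R) : R⟦X⟧ := mk fun n => (n ! : ℚ)⁻¹ • a n

@[simp]
theorem coeff_egf (a : ℕ → R) (n : ℕ) : coeff n (egf a) = (n ! : ℚ)⁻¹ • a n :=
  coeff_mk _ _

theorem constantCoeff_egf (a : ℕ → R) : constantCoeff (egf a) = a 0 := by
  simp [← coeff_zero_eq_constantCoeff_apply]

theorem egf_injective : Function.Injective (egf : (ℕ → R) → R⟦X⟧) := fun a b h =>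
  funext fun n => by
    simpa [smul_inv_smul₀ (cast_ne_zero.2 (factorial_ne_zero n) : (n ! : ℚ) ≠ 0)] using
      congrArg (fun E => (n ! : ℚ) • coeff n E) h

theorem egf_surjective : Function.Surjective (egf : (ℕ → R) → R⟦X⟧) := fun E =>
  ⟨fun n => (n ! : ℚ) • coeff n E, by
    ext n
    simp [inv_smul_smul₀ (cast_ne_zero.2 (factorial_ne_zero n) : (n ! : ℚ) ≠ 0)]⟩

theorem derivative_egf (a : ℕ → R) : d⁄dX R (egf a) = egf fun n => a (n + 1) := by
  ext n
  rw [coeff_derivative, coeff_egf, coeff_egf, smul_mul_assoc, mul_comm, ← Nat.cast_succ,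
    ← nsmul_eq_mul, ← Nat.cast_smul_eq_nsmul ℚ, smul_smul]
  congr 1
  rw [factorial_succ, cast_mul]
  field_simp

theorem egf_mul (a b : ℕ → R) :
    egf a * egf b = egf fun n => ∑ j ∈ range (n + 1), n.choose j • (a j * b (n - j)) := by
  ext n
  rw [coeff_mul, Nat.sum_antidiagonal_eq_sum_range_succ_mk, coeff_egf, smul_sum]
  refine sum_congr rfl fun j hj => ?_
  have hjn : j ≤ n := mem_range_succ_iff.1 hj
  rw [coeff_egf, coeff_egf, smul_mul_smul_comm, ← Nat.cast_smul_eq_nsmul ℚ, smul_smul]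
  congr 1
  have hfact := Nat.choose_mul_factorial_mul_factorial hjn
  field_simp
  rw [← hfact, Nat.cast_mul, Nat.cast_mul]
  ring

end Egf

section Exp

variable {R : Type*} [CommRing R] [Algebra ℚ R]

theorem expPS_eq_subst_exp {g : R⟦X⟧} (hg : HasSubst g) : expPS g = (exp R).subst g := by
  ext n
  simp [expPS, coeff_subst' hg, Algebra.smul_def]

theorem derivative_expPS {g : R⟦X⟧} (hg : HasSubst g) :
    d⁄dX R (expPS g) = expPS g * d⁄dX R g := by
  rw [expPS_eq_subst_exp hg, derivative_subst hg, derivative_exp]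

theorem constantCoeff_expPS {g : R⟦X⟧} (hg : constantCoeff g = 0) :
    constantCoeff (expPS g) = 1 := by
  rw [← coeff_zero_eq_constantCoeff_apply, expPS, coeff_mk, finsum_eq_single _ 0]
  · simp
  · intro k hk
    rw [coeff_zero_eq_constantCoeff_apply, map_pow, hg, zero_pow hk, smul_zero]

theorem expPS_egf {x : ℕ → R} (hx : x 0 = 0) : expPS (egf x) = egf (completeBell x) := by
  have hg : constantCoeff (egf x) = 0 := by rw [constantCoeff_egf, hx]
  obtain ⟨y, hy⟩ := egf_surjective (expPS (egf x))
  rw [← hy]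
  refine congrArg egf (eq_completeBell ?_ fun n => ?_)
  · rw [← constantCoeff_egf y, hy, constantCoeff_expPS hg]
  · have hode := derivative_expPS (HasSubst.of_constantCoeff_zero' hg)
    rw [← hy, derivative_egf, derivative_egf, mul_comm, egf_mul] at hode
    exact congrFun (egf_injective hode) n

end Exp

end PowerSeries

/-- classical exponential formula: if
`f = ∑_{n ≥ 1} fₙ zⁿ/n!`, then for every `n ≥ 0` the `n`-th coefficient of
`exp(f)`, multiplied by `n!`, equals `∑_{π ∈ Πₙ} ∏_{p ∈ π} f_{card p}` where
`Πₙ` is the set of set partitions of `{1, …, n}` into nonempty blocks. -/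
theorem classical_exponential_formula {R : Type*} [CommRing R] [Algebra ℚ R]
    (f : ℕ → R) (n : ℕ) :
    (n.factorial : R) *
        PowerSeries.coeff (R := R) n
          (expPS (PowerSeries.mk fun m =>
            if m = 0 then 0 else ((m.factorial : ℚ)⁻¹) • f m))
      = ∑ π ∈ natPartitionsOf n, ∏ p ∈ π, f p.card := by
  set x : ℕ → R := fun m => if m = 0 then 0 else f m
  have hseries : (PowerSeries.mk fun m => if m = 0 then 0 else ((m.factorial : ℚ)⁻¹) • f m) =
      PowerSeries.egf x := by
    ext m
    by_cases hm : m = 0 <;> simp [x, hm]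
  have hbell : completeBell x = completeBell f := completeBell_congr fun m => if_neg m.succ_ne_zero
  rw [hseries, PowerSeries.expPS_egf (x := x) (if_pos rfl), PowerSeries.coeff_egf, hbell,
    ← nsmul_eq_mul, ← Nat.cast_smul_eq_nsmul ℚ, smul_inv_smul₀ (by positivity),
    natPartitionsOf_eq_setPartitions, sum_setPartitions_prod_card, Nat.card_Icc,
    Nat.add_sub_cancel]
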